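/- arXiv:2403.17703 — 7 statements merged into one kernel-verified Lean document; each statement's English description precedes it below -/
import Mathlib

section
/- Let G be a group, H and K subgroups of G with [G:K] finite. Let L = H ∩ K. If [H:L] is finite and L is a separable subgroup of K (i.e., for each x ∈ K \ L there is a finite group F and homomorphism φ: K → F with φ(x) ∉ φ(L)), then H is a separable subgroup of G. -/
/-- A subgroup `H` of a group `G` is *separable* in `G` if for each `x ∈ G \ H` there is a
finite group `F` and a group homomorphism `φ : G →* F` with `φ x ∉ φ '' H`. -/
def SubgroupSeparable {G : Type*} [Group G] (H : Subgroup G) : Prop :=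
  ∀ x : G, x ∉ H →
    ∃ (F : Type) (_ : Group F) (_ : Finite F) (φ : G →* F), φ x ∉ φ '' (H : Set G)

/-!
Write `L = H ⊓ K`. An element `x ∉ H` is separated from `H` by a finite-index normal subgroup
`N` as soon as `x ∉ H ⊔ N`. If this holds for the normal core `N` of `K` we are done. Otherwise
`x = h * k` with `h ∈ H` and `k ∈ K \ L`; separability of `L` in `K` yields a finite-index
`M ≤ K` containing `L` but not `k`, and the normal core `N` of `M` works, because for `N ≤ K`
Dedekind's law gives `K ⊓ (H ⊔ N) = L ⊔ N ≤ M`.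
-/

namespace Subgroup

variable {G : Type*} [Group G]

theorem inf_sup_assoc_of_le_of_normal (K H : Subgroup G) {N : Subgroup G} [N.Normal]
    (hNK : N ≤ K) : K ⊓ H ⊔ N = K ⊓ (H ⊔ N) :=
  SetLike.coe_injective <| by
    rw [mul_normal, inf_mul_assoc _ _ _ hNK, coe_inf, mul_normal]

instance finiteIndex_map_subtype {K : Subgroup G} [K.FiniteIndex] (M : Subgroup K)
    [M.FiniteIndex] : (M.map K.subtype).FiniteIndex :=
  ⟨by
    rw [index_map_subtype]
    exact mul_ne_zero FiniteIndex.index_ne_zero FiniteIndex.index_ne_zero⟩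

end Subgroup

namespace SubgroupSeparable

variable {G : Type*} [Group G] {H : Subgroup G}

theorem of_forall_exists_normal
    (h : ∀ x ∉ H, ∃ N : Subgroup G, N.Normal ∧ N.FiniteIndex ∧ x ∉ H ⊔ N) :
    SubgroupSeparable H := by
  intro x hx
  obtain ⟨N, _, _, hxN⟩ := h x hx
  have : Small.{0} (G ⧸ N) := Countable.toSmall _
  let φ : G →* Shrink.{0} (G ⧸ N) :=
    ((Shrink.mulEquiv.{0} (α := G ⧸ N)).symm : G ⧸ N →* Shrink.{0} (G ⧸ N)).comp
      (QuotientGroup.mk' N)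
  have hker : φ.ker = N := by
    rw [MonoidHom.ker_mulEquiv_comp, QuotientGroup.ker_mk']
  refine ⟨_, inferInstance, Finite.of_equiv _ (equivShrink _), φ, fun hφx => hxN ?_⟩
  rw [← hker, ← Subgroup.comap_map_eq]
  exact hφx

theorem exists_finiteIndex_le_notMem (hH : SubgroupSeparable H) {x : G} (hx : x ∉ H) :
    ∃ M : Subgroup G, M.FiniteIndex ∧ H ≤ M ∧ x ∉ M := by
  obtain ⟨F, _, _, φ, hφx⟩ := hH x hx
  refine ⟨(H.map φ).comap φ, ?_, fun h hh => ⟨h, hh, rfl⟩, hφx⟩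
  rw [Subgroup.comap_map_eq]
  exact Subgroup.finiteIndex_of_le le_sup_right

end SubgroupSeparable

theorem separable_of_finite_index_intersection_general {G : Type*} [Group G] (H K : Subgroup G)
    (hK : K.FiniteIndex)
    (hLsep : SubgroupSeparable ((H ⊓ K).subgroupOf K)) :
    SubgroupSeparable H := by
  refine SubgroupSeparable.of_forall_exists_normal fun x hxH => ?_
  by_cases hxHK : x ∉ H ⊔ K.normalCore
  · exact ⟨K.normalCore, inferInstance, inferInstance, hxHK⟩
  obtain ⟨h, hh, k, hkK, rfl⟩ :=
    Subgroup.mem_sup_of_normal_right.mp (not_not.mp hxHK)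
  replace hkK := K.normalCore_le hkK
  have hkL : (⟨k, hkK⟩ : K) ∉ (H ⊓ K).subgroupOf K := fun hk =>
    hxH (H.mul_mem hh (Subgroup.mem_subgroupOf.mp hk).1)
  obtain ⟨M₀, _, hLM₀, hkM₀⟩ := hLsep.exists_finiteIndex_le_notMem hkL
  set M := M₀.map K.subtype
  have hKHM : K ⊓ H ≤ M := fun y hy =>
    ⟨⟨y, hy.1⟩, hLM₀ (Subgroup.mem_subgroupOf.mpr ⟨hy.2, hy.1⟩), rfl⟩
  refine ⟨M.normalCore, inferInstance, inferInstance, fun hx => hkM₀ ?_⟩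
  have hk : k ∈ H ⊔ M.normalCore := by
    simpa using (H ⊔ M.normalCore).mul_mem (Subgroup.mem_sup_left (H.inv_mem hh)) hx
  have hNK : M.normalCore ≤ K := M.normalCore_le.trans (Subgroup.map_subtype_le M₀)
  have hkM : k ∈ K ⊓ H ⊔ M.normalCore := by
    rw [Subgroup.inf_sup_assoc_of_le_of_normal _ _ hNK]
    exact ⟨hkK, hk⟩
  obtain ⟨k', hk', rfl⟩ := sup_le hKHM M.normalCore_le hkM
  exact hk'

/-- Let `H` and `K` be subgroups of `G` with `[G : K]` finite. Let `L = H ⊓ K`. If `[H : L]` is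
finite and `L` is a separable subgroup of `K`, then `H` is a separable subgroup of `G`. -/
theorem separable_of_finite_index_intersection {G : Type*} [Group G] (H K : Subgroup G)
    (hK : K.FiniteIndex) (hHL : ((H ⊓ K).subgroupOf H).FiniteIndex)
    (hLsep : SubgroupSeparable ((H ⊓ K).subgroupOf K)) :
    SubgroupSeparable H :=
  separable_of_finite_index_intersection_general H K hK hLsep
end

section
/- Let G be a finitely generated residually finite group and α ∈ Aut(G). Then the twisted conjugation quandle Conj(G, α) is a residually finite quandle. -/
/-!
In a finitely generated group there are only finitely many homomorphisms into a given finite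
group, so the intersection of their kernels is a characteristic subgroup of finite index. Applied
to the permutation group of `G ⧸ N`, where `N` is a finite-index subgroup avoiding `x⁻¹ * y`, this
gives a finite quotient `G ⧸ M` to which `α` descends; the quotient map is then a homomorphism of
twisted conjugation quandles onto the finite quandle `Conj(G ⧸ M, ᾱ)` separating `x` and `y`.
-/

/-- The twisted conjugation quandle `Conj(G, α)` on the underlying set of the group `G`,
with operation `x * y = α (y⁻¹ x) y`.  (In Mathlib's left-action convention,
`Shelf.act y x` is the paper's `x * y`.) -/
def twistedConjQuandle {G : Type*} [Group G] (α : G ≃* G) : Quandle G where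
  act a b := α (a⁻¹ * b) * a
  self_distrib := by
    intro x y z
    simp only [map_mul, map_inv, mul_inv_rev, inv_inv, mul_assoc, mul_inv_cancel_left,
      inv_mul_cancel_left]
  invAct a b := a * α.symm (b * a⁻¹)
  left_inv a b := by
    simp only [map_mul, map_inv, MulEquiv.symm_apply_apply, mul_inv_rev, inv_inv, mul_assoc,
      mul_inv_cancel_left, inv_mul_cancel_left, mul_inv_cancel, mul_one]
  right_inv a b := by
    simp only [map_mul, map_inv, MulEquiv.apply_symm_apply, mul_inv_rev, inv_inv, mul_assoc,
      mul_inv_cancel_left, inv_mul_cancel_left, inv_mul_cancel, mul_one]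
  fix := by
    intro x
    simp

/-- A quandle `X` is *residually finite* if any two distinct elements of `X` can be separated
by a quandle homomorphism into a finite quandle. -/
def QuandleResiduallyFinite (X : Type*) [Quandle X] : Prop :=
  ∀ x y : X, x ≠ y →
    ∃ (F : Type) (_ : Quandle F) (_ : Finite F) (φ : ShelfHom X F), φ x ≠ φ y

section

variable {G H : Type*} [Group G] [Group H]

theorem Group.FG.finite_monoidHom {M : Type*} [Monoid M] [Finite M] (hG : Group.FG G) :
    Finite (G →* M) := by
  obtain ⟨S, hS, hSfin⟩ := Group.fg_iff.mp hG
  have := hSfin.to_subtype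
  exact Finite.of_injective (fun f : G →* M => fun s : S => f s)
    fun f g hfg => MonoidHom.eq_of_eqOn_dense hS fun s hs => congrFun hfg ⟨s, hs⟩

instance Subgroup.iInf_ker_characteristic (Q : Type*) [Group Q] :
    (⨅ f : G →* Q, f.ker).Characteristic := by
  refine Subgroup.characteristic_iff_comap_eq.mpr fun φ => ?_
  simp_rw [Subgroup.comap_iInf, MonoidHom.comap_ker]
  exact (MulEquiv.monoidHomCongrLeftEquiv φ.symm).iInf_comp (g := fun f : G →* Q => f.ker)

theorem Group.FG.exists_characteristic_finiteIndex_le (hG : Group.FG G) (N : Subgroup G)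
    [N.FiniteIndex] : ∃ M : Subgroup G, M.Characteristic ∧ M.FiniteIndex ∧ M ≤ N := by
  have := hG.finite_monoidHom (M := Equiv.Perm (G ⧸ N))
  refine ⟨⨅ f : G →* Equiv.Perm (G ⧸ N), f.ker, inferInstance,
    Subgroup.finiteIndex_iInf fun f => Subgroup.finiteIndex_ker f, ?_⟩
  calc ⨅ f : G →* Equiv.Perm (G ⧸ N), f.ker
      ≤ (MulAction.toPermHom G (G ⧸ N)).ker := iInf_le _ _
    _ = N.normalCore := N.normalCore_eq_ker.symm
    _ ≤ N := N.normalCore_le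

def MonoidHom.toTwistedConjHom (f : G →* H) {α : G ≃* G} {β : H ≃* H}
    (hf : ∀ g, f (α g) = β (f g)) :
    @ShelfHom G H (twistedConjQuandle α).toShelf (twistedConjQuandle β).toShelf :=
  @ShelfHom.mk _ _ (twistedConjQuandle α).toShelf (twistedConjQuandle β).toShelf f fun {a b} => by
    change f (α (a⁻¹ * b) * a) = β ((f a)⁻¹ * f b) * f a
    rw [map_mul, hf, map_mul, map_inv]

theorem exists_finite_twistedConj_separating [Finite H] (f : G →* H) {α : G ≃* G}
    {β : H ≃* H} (hf : ∀ g, f (α g) = β (f g)) {x y : G} (hxy : f x ≠ f y) :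
    ∃ (F : Type) (_ : Quandle F) (_ : Finite F)
      (φ : @ShelfHom G F (twistedConjQuandle α).toShelf _), φ x ≠ φ y := by
  let e : H ≃* Shrink.{0} H := Shrink.mulEquiv.symm
  refine ⟨Shrink.{0} H, twistedConjQuandle ((e.symm.trans β).trans e), Finite.of_equiv H e,
    (e.toMonoidHom.comp f).toTwistedConjHom fun g => by simp [hf], ?_⟩
  exact e.injective.ne hxy

end

/-- If `G` is a finitely generated residually finite group and `α ∈ Aut(G)`, then the twisted
conjugation quandle `Conj(G, α)` is a residually finite quandle. -/
theorem twistedConj_residuallyFinite {G : Type*} [Group G] (hfg : Group.FG G)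
    (hrf : ∀ x : G, x ≠ 1 → ∃ (F : Type) (_ : Group F) (_ : Finite F) (φ : G →* F), φ x ≠ 1)
    (α : G ≃* G) :
    @QuandleResiduallyFinite G (twistedConjQuandle α) := by
  have := Group.residuallyFinite_of_forall_exists_finite_monoidHom hrf
  intro x y hxy
  obtain ⟨N, hxyN⟩ := Group.exists_finiteIndexNormalSubgroup_notMem (x⁻¹ * y)
    (mt inv_mul_eq_one.mp hxy)
  obtain ⟨M, hM, _, hMN⟩ := hfg.exists_characteristic_finiteIndex_le N.toSubgroup
  refine exists_finite_twistedConj_separating (QuotientGroup.mk' M)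
    (β := QuotientGroup.congr M M α (Subgroup.characteristic_iff_map_eq.mp hM α))
    (fun _ => rfl) fun h => hxyN (hMN (QuotientGroup.eq.mp h))
end

section
/- Let G be a subgroup separable group, H a subgroup of G, and α an inner automorphism of G with α(H) = H. Then Alex(H, α|_H) is a separable subquandle of Alex(G, α): for each x ∈ G \ H there is a finite quandle F and a quandle homomorphism φ: Alex(G,α) → F with φ(x) ∉ φ(H). -/
/-- The generalized Alexander quandle `Alex(G, α)` on the underlying set of the group `G`,
with operation `x * y = α (x y⁻¹) y`.  (In Mathlib's left-action convention,
`Shelf.act y x` is the paper's `x * y`.) -/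
def alexanderQuandle {G : Type*} [Group G] (α : G ≃* G) : Quandle G where
  act a b := α (b * a⁻¹) * a
  self_distrib := by
    intro x y z
    simp only [map_mul, map_inv, mul_inv_rev, inv_inv, mul_assoc, mul_inv_cancel_left,
      inv_mul_cancel_left]
  invAct a b := α.symm (b * a⁻¹) * a
  left_inv a b := by
    simp only [mul_inv_cancel_right, MulEquiv.symm_apply_apply, inv_mul_cancel_right]
  right_inv a b := by
    simp only [mul_inv_cancel_right, MulEquiv.apply_symm_apply, inv_mul_cancel_right]
  fix := by
    intro x
    simp

/-- A subset `S` of a quandle `X` is *separable* if each `z ∈ X \ S` can be separated from `S`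
by a quandle homomorphism into a finite quandle. -/
def QuandleSubsetSeparable {X : Type*} [Quandle X] (S : Set X) : Prop :=
  ∀ z : X, z ∉ S →
    ∃ (F : Type) (_ : Quandle F) (_ : Finite F) (φ : ShelfHom X F), φ z ∉ φ '' S

/-- `G` is *subgroup separable* if every finitely generated subgroup of `G` is separable. -/
def SubgroupSeparableGroup (G : Type*) [Group G] : Prop :=
  ∀ H : Subgroup G, H.FG → SubgroupSeparable H

/-- Let `G` be a subgroup separable group, `H` a finitely generated subgroup of `G`, and `α`
the inner automorphism of `G` by `g`, with `α (H) = H`. Then `Alex(H, α|_H)` is a separable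
subquandle of `Alex(G, α)`. -/
theorem alexander_subquandle_separable {G : Type*} [Group G]
    (hsep : SubgroupSeparableGroup G) (H : Subgroup G) (hfg : H.FG) (g : G)
    (hinv : ∀ h : G, h ∈ H ↔ (MulAut.conj g) h ∈ H) :
    @QuandleSubsetSeparable G (alexanderQuandle (MulAut.conj g : G ≃* G)) (H : Set G) := by
  intro z hz
  obtain ⟨F, _, _, φ, hφ⟩ := hsep H hfg z hz
  refine ⟨F, alexanderQuandle (MulAut.conj (φ g) : F ≃* F), ‹Finite F›,
    @ShelfHom.mk G F
      (Rack.toShelf (self := Quandle.toRack (self := alexanderQuandle (MulAut.conj g : G ≃* G))))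
      (Rack.toShelf (self := Quandle.toRack (self := alexanderQuandle (MulAut.conj (φ g) : F ≃* F))))
      φ ?_, hφ⟩
  intro a b
  show φ (g * (b * a⁻¹) * g⁻¹ * a) = φ g * (φ b * (φ a)⁻¹) * (φ g)⁻¹ * φ a
  simp [mul_assoc]
end

section
/- Let G be a group and H a subgroup of G that is also a subquandle of Conj(G) (i.e., closed under conjugation operation). If H is a separable subgroup of G, then Conj(H) is a separable subquandle of Conj(G). -/
/-- Let `H` be a subgroup of `G` that is also a subquandle of `Conj(G)` (closed under the
conjugation operation).  If `H` is a separable subgroup of `G`, then `Conj(H)` is a separable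
subquandle of `Conj(G)`. -/
theorem conj_subquandle_separable {G : Type*} [Group G] (H : Subgroup G)
    (hclosed : ∀ a ∈ H, ∀ b ∈ H, a * b * a⁻¹ ∈ H)
    (hsep : SubgroupSeparable H) :
    QuandleSubsetSeparable (X := Quandle.Conj G) (H : Set G) := by
  intro z hz
  obtain ⟨F, _, _, φ, hφ⟩ := hsep z hz
  exact ⟨Quandle.Conj F, inferInstance, inferInstance, Quandle.Conj.map φ, hφ⟩
end

section
/- Let w(x,y) = y x⁻¹ y (the core operation). For any group G, the operation g *_w h = h g⁻¹ h makes G a quandle, and if G is subgroup separable, then for every finitely generated subquandle (H, *_w) of (G, *_w) with H a subgroup of G, the subquandle (H, *_w) is separable in (G, *_w). -/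
/-- The core quandle of a group `G`, with operation `g *_w h = h g⁻¹ h` for
`w(x,y) = y x⁻¹ y`.  (In Mathlib's left-action convention, `Shelf.act h g` is `g *_w h`.) -/
def coreQuandle (G : Type*) [Group G] : Quandle G where
  act a b := a * b⁻¹ * a
  self_distrib := by
    intro x y z
    group
  invAct a b := a * b⁻¹ * a
  left_inv a b := by group
  right_inv a b := by group
  fix := by
    intro x
    group

/-- The subquandle of the core quandle of `G` generated by a subset `T`:
the closure of `T` under the operation `a *_w b = b a⁻¹ b` (which is involutive, so it is
also closed under the dual operation). -/
inductive CoreClosure {G : Type*} [Group G] (T : Set G) : G → Prop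
  | base {a : G} : a ∈ T → CoreClosure T a
  | op {a b : G} : CoreClosure T a → CoreClosure T b → CoreClosure T (b * a⁻¹ * b)

/-- For `w(x,y) = y x⁻¹ y`, the operation `g *_w h = h g⁻¹ h` makes any group `G` a quandle,
and if `G` is subgroup separable, then every finitely generated subquandle `(H, *_w)` of
`(G, *_w)` with `H` a subgroup of `G` is separable in `(G, *_w)`. -/
theorem core_quandle_and_separability {G : Type*} [Group G] :
    let op : G → G → G := fun g h => h * g⁻¹ * h
    ((∀ g : G, op g g = g) ∧
      (∀ h : G, Function.Bijective (fun g : G => op g h)) ∧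
      (∀ x y z : G, op (op x y) z = op (op x z) (op y z))) ∧
    (SubgroupSeparableGroup G → ∀ H : Subgroup G,
      (∃ T : Finset G, (T : Set G) ⊆ (H : Set G) ∧
        ∀ x : G, x ∈ H ↔ CoreClosure (T : Set G) x) →
      @QuandleSubsetSeparable G (coreQuandle G) (H : Set G)) := by
  intro op
  refine ⟨⟨fun g => by simp [op], fun h => ?_, fun x y z => by simp only [op]; group⟩, ?_⟩
  · have : Function.Involutive (fun g : G => op g h) := fun g => by simp [op]
    exact this.bijective
  · intro hsep H ⟨T, hTH, hH⟩
    -- H = Subgroup.closure T, hence finitely generated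
    have hsub : ∀ x : G, CoreClosure (T : Set G) x → x ∈ Subgroup.closure (T : Set G) := by
      intro x hx
      induction hx with
      | base h => exact Subgroup.subset_closure h
      | op _ _ iha ihb => exact mul_mem (mul_mem ihb (inv_mem iha)) ihb
    have hHeq : H = Subgroup.closure (T : Set G) := by
      apply le_antisymm
      · intro x hx; exact hsub x ((hH x).mp hx)
      · exact (Subgroup.closure_le H).mpr hTH
    have hfg : H.FG := ⟨T, hHeq.symm⟩
    intro z hz
    obtain ⟨F, _, _, φ, hφ⟩ := hsep H hfg z hz
    letI : Quandle F := coreQuandle F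
    letI : Quandle G := coreQuandle G
    refine ⟨F, inferInstance, inferInstance, ⟨φ, ?_⟩, hφ⟩
    intro x y
    show φ (x * y⁻¹ * x) = φ x * (φ y)⁻¹ * φ x
    simp
end

section
/- Let X be an abelian quandle (i.e., (x*y)*z = (x*z)*y for all x,y,z) generated as a quandle by a finite set of r elements. Then for each n ≥ 2, the n-quandle quotient X_n of X (obtained by imposing x *ⁿ y = x for all x,y) is finite, with |X_n| ≤ r·n^{r-1}. -/
/-- A quandle is *abelian* if `(x * y) * z = (x * z) * y` for all `x, y, z` (equivalently its
inner automorphism group is abelian).  In Mathlib's left-action convention this reads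
`z ◃ (y ◃ x) = y ◃ (z ◃ x)`. -/
def IsAbelianQuandle (X : Type*) [Quandle X] : Prop :=
  ∀ x y z : X, Shelf.act z (Shelf.act y x) = Shelf.act y (Shelf.act z x)

/-- The subquandle generated by a subset `T` of a quandle: the closure of `T` under the
quandle operation and its dual. -/
inductive QuandleClosure {X : Type*} [Rack X] (T : Set X) : X → Prop
  | base {a : X} : a ∈ T → QuandleClosure T a
  | act {a b : X} : QuandleClosure T a → QuandleClosure T b →
      QuandleClosure T (Shelf.act a b)
  | invAct {a b : X} : QuandleClosure T a → QuandleClosure T b →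
      QuandleClosure T (Rack.invAct a b)

/-- The congruence on a quandle `X` generated by the relations `x *ⁿ y = x` (i.e.
`(Shelf.act y)^[n] x = x`): the smallest equivalence relation containing these pairs and
compatible with the quandle operation and its dual.  The quotient is the `n`-quandle `X_n`. -/
inductive NQuandleRel (X : Type*) [Quandle X] (n : ℕ) : X → X → Prop
  | base (a b : X) : NQuandleRel X n ((Shelf.act b)^[n] a) a
  | refl (a : X) : NQuandleRel X n a a
  | symm {a b : X} : NQuandleRel X n a b → NQuandleRel X n b a
  | trans {a b c : X} : NQuandleRel X n a b → NQuandleRel X n b c → NQuandleRel X n a c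
  | act {a b c d : X} : NQuandleRel X n a b → NQuandleRel X n c d →
      NQuandleRel X n (Shelf.act a c) (Shelf.act b d)
  | invAct {a b c d : X} : NQuandleRel X n a b → NQuandleRel X n c d →
      NQuandleRel X n (Rack.invAct a c) (Rack.invAct b d)

/-- The setoid underlying the `n`-quandle quotient `X_n` of a quandle `X`. -/
def nQuandleSetoid (X : Type*) [Quandle X] (n : ℕ) : Setoid X :=
  ⟨NQuandleRel X n, fun a => NQuandleRel.refl a, fun h => h.symm, fun h h' => h.trans h'⟩

/-!
In an abelian quandle `(a ◃ b) ◃ c = b ◃ c`, so every element of the quandle generated by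
`x₁, …, x_r` translates like some generator, and every element is `h • xᵢ` for `h` in the group
generated by the pairwise commuting translations `S_{x_j}`. In an `n`-quandle each `S_{x_j}` has
order dividing `n` and `S_{x_i}` fixes `xᵢ`, so `h • xᵢ` is determined by `i` and by the exponents
of the `S_{x_j}`, `j ≠ i`, modulo `n`: at most `r * n ^ (r - 1)` possibilities. The `n`-quandle
quotient is itself an abelian `n`-quandle, generated by the images of the `xᵢ`.
-/

open Quandles

theorem exists_fin_pow_eq_zpow {G : Type*} [Group G] {g : G} {n : ℕ} (hn : n ≠ 0)
    (hg : g ^ n = 1) (a : ℤ) : ∃ m : Fin n, g ^ (m : ℕ) = g ^ a := by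
  have hn' : (n : ℤ) ≠ 0 := by exact_mod_cast hn
  have hnonneg : 0 ≤ a % n := Int.emod_nonneg a hn'
  have hlt : a % n < n := Int.emod_lt_of_pos a (by omega)
  refine ⟨⟨(a % n).toNat, by omega⟩, ?_⟩
  rw [zpow_eq_zpow_emod' a hg, ← zpow_natCast, Int.toNat_of_nonneg hnonneg]

theorem exists_fin_exponents_smul_eq {G α ι : Type*} [CommGroup G] [MulAction G α] [Fintype ι]
    [DecidableEq ι] {g : ι → G} {n : ℕ} (hn : n ≠ 0) (hg : ∀ j, g j ^ n = 1) {i : ι} {p : α}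
    (hp : g i • p = p) {h : G} (hh : h ∈ Subgroup.closure (Set.range g)) :
    ∃ e : {j // j ≠ i} → Fin n, (∏ j : {j // j ≠ i}, g j ^ (e j : ℕ)) • p = h • p := by
  obtain ⟨a, rfl⟩ := Subgroup.exists_of_mem_closure_range _ _ hh
  choose e he using fun j : {j // j ≠ i} => exists_fin_pow_eq_zpow hn (hg j) (a j)
  have hfix : g i ^ a i • p = p := by
    rw [← MulAction.mem_stabilizer_iff] at hp ⊢
    exact zpow_mem hp _
  refine ⟨e, ?_⟩
  rw [Fintype.prod_eq_mul_prod_subtype_ne _ i, mul_comm, mul_smul, hfix]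
  simp only [he]

theorem ShelfHom.map_invAct {R₁ R₂ : Type*} [Rack R₁] [Rack R₂] (f : R₁ →◃ R₂) (a b : R₁) :
    f (a ◃⁻¹ b) = f a ◃⁻¹ f b := by
  rw [← Rack.left_cancel (f a), ← f.map_act, Rack.act_invAct_eq, Rack.act_invAct_eq]

theorem ShelfHom.map_iterate_act {S₁ S₂ : Type*} [Shelf S₁] [Shelf S₂] (f : S₁ →◃ S₂)
    (a b : S₁) (k : ℕ) : f ((Shelf.act b)^[k] a) = (Shelf.act (f b))^[k] (f a) :=
  (show Function.Semiconj f (Shelf.act b) (Shelf.act (f b)) from fun _ => f.map_act).iterate_right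
    k a

theorem QuandleClosure.image {R₁ R₂ : Type*} [Rack R₁] [Rack R₂] (f : R₁ →◃ R₂) {T : Set R₁}
    {a : R₁} (ha : QuandleClosure T a) : QuandleClosure (f '' T) (f a) := by
  induction ha with
  | base h => exact .base (Set.mem_image_of_mem f h)
  | act _ _ iha ihb => rw [f.map_act]; exact .act iha ihb
  | invAct _ _ iha ihb => rw [f.map_invAct]; exact .invAct iha ihb

namespace nQuandleSetoid

variable {X : Type*} [Quandle X] {n : ℕ}

instance : Quandle (Quotient (nQuandleSetoid X n)) where
  act := Quotient.map₂ Shelf.act fun _ _ h _ _ h' => NQuandleRel.act h h'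
  invAct := Quotient.map₂ Rack.invAct fun _ _ h _ _ h' => NQuandleRel.invAct h h'
  self_distrib := by
    rintro ⟨a⟩ ⟨b⟩ ⟨c⟩
    exact congrArg (Quotient.mk _) Shelf.self_distrib
  left_inv := by
    rintro ⟨a⟩ ⟨b⟩
    exact congrArg (Quotient.mk _) (Rack.left_inv a b)
  right_inv := by
    rintro ⟨a⟩ ⟨b⟩
    exact congrArg (Quotient.mk _) (Rack.right_inv a b)
  fix := by
    rintro ⟨a⟩
    exact congrArg (Quotient.mk _) Quandle.fix

variable (X n) in
def mkHom : X →◃ Quotient (nQuandleSetoid X n) where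
  toFun := Quotient.mk _
  map_act' := rfl

theorem isAbelianQuandle_quotient (habel : IsAbelianQuandle X) :
    IsAbelianQuandle (Quotient (nQuandleSetoid X n)) := by
  rintro ⟨a⟩ ⟨b⟩ ⟨c⟩
  exact congrArg (Quotient.mk _) (habel a b c)

theorem iterate_act_quotient (a b : Quotient (nQuandleSetoid X n)) :
    (Shelf.act b)^[n] a = a := by
  induction a, b using Quotient.inductionOn₂ with
  | h a b => exact ((mkHom X n).map_iterate_act a b n).symm.trans (Quotient.sound (.base a b))

end nQuandleSetoid

namespace IsAbelianQuandle

variable {X : Type*} [Quandle X]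

theorem act_act_left (habel : IsAbelianQuandle X) (a b c : X) : (a ◃ b) ◃ c = b ◃ c := by
  rw [← Rack.act_invAct_eq a c, ← Shelf.self_distrib, habel, Rack.act_invAct_eq]

theorem invAct_act_left (habel : IsAbelianQuandle X) (a b c : X) : (a ◃⁻¹ b) ◃ c = b ◃ c := by
  rw [← habel.act_act_left a, Rack.act_invAct_eq]

theorem act'_mul_comm (habel : IsAbelianQuandle X) (a b : X) :
    Rack.act' a * Rack.act' b = Rack.act' b * Rack.act' a :=
  Equiv.ext fun c => habel c b a

theorem exists_act_eq_of_mem_closure (habel : IsAbelianQuandle X) {T : Set X} {a : X}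
    (ha : QuandleClosure T a) : ∃ t ∈ T, Shelf.act a = Shelf.act t := by
  induction ha with
  | base h => exact ⟨_, h, rfl⟩
  | @act a b _ _ _ ihb =>
    obtain ⟨t, ht, hbt⟩ := ihb
    exact ⟨t, ht, funext fun c => by rw [habel.act_act_left, hbt]⟩
  | @invAct a b _ _ _ ihb =>
    obtain ⟨t, ht, hbt⟩ := ihb
    exact ⟨t, ht, funext fun c => by rw [habel.invAct_act_left, hbt]⟩

theorem exists_mem_closure_smul_eq (habel : IsAbelianQuandle X) {G ι : Type*} [Group G]
    [MulAction G X] {x : ι → X} {τ : ι → G} (hτ : ∀ j b, τ j • b = x j ◃ b) {a : X}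
    (ha : QuandleClosure (Set.range x) a) :
    ∃ i, ∃ h ∈ Subgroup.closure (Set.range τ), h • x i = a := by
  induction ha with
  | base h =>
    obtain ⟨i, rfl⟩ := h
    exact ⟨i, 1, one_mem _, one_smul _ _⟩
  | @act a b ha _ _ ihb =>
    obtain ⟨i, h, hh, rfl⟩ := ihb
    obtain ⟨_, ⟨k, rfl⟩, hk⟩ := habel.exists_act_eq_of_mem_closure ha
    refine ⟨i, τ k * h, mul_mem (Subgroup.subset_closure ⟨k, rfl⟩) hh, ?_⟩
    rw [mul_smul, hτ, hk]
  | @invAct a b ha _ _ ihb =>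
    obtain ⟨i, h, hh, rfl⟩ := ihb
    obtain ⟨_, ⟨k, rfl⟩, hk⟩ := habel.exists_act_eq_of_mem_closure ha
    refine ⟨i, (τ k)⁻¹ * h, mul_mem (inv_mem (Subgroup.subset_closure ⟨k, rfl⟩)) hh, ?_⟩
    rw [mul_smul, inv_smul_eq_iff, hτ, ← hk, Rack.act_invAct_eq]

open scoped IsMulCommutative in
theorem finite_and_card_le (habel : IsAbelianQuandle X) {n : ℕ} (hn : n ≠ 0)
    (hper : ∀ a b : X, (Shelf.act b)^[n] a = a) {r : ℕ} (x : Fin r → X)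
    (hgen : ∀ a, QuandleClosure (Set.range x) a) :
    Finite X ∧ Nat.card X ≤ r * n ^ (r - 1) := by
  let H := Subgroup.closure (Set.range fun j => Rack.act' (x j))
  have : IsMulCommutative H := Subgroup.isMulCommutative_closure <| by
    rintro _ ⟨j, rfl⟩ _ ⟨k, rfl⟩
    exact habel.act'_mul_comm (x j) (x k)
  let τ : Fin r → H := fun j => ⟨Rack.act' (x j), Subgroup.subset_closure ⟨j, rfl⟩⟩
  have hτ : ∀ j b, τ j • b = x j ◃ b := fun _ _ => rfl
  have hτn : ∀ j, τ j ^ n = 1 := fun j =>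
    Subtype.ext <| Equiv.ext fun b => by
      rw [Subgroup.coe_pow, Equiv.Perm.coe_pow]
      exact hper b (x j)
  let Φ : (Σ i : Fin r, {j // j ≠ i} → Fin n) → X := fun p =>
    (∏ j : {j // j ≠ p.1}, τ j ^ (p.2 j : ℕ)) • x p.1
  have hΦ : Function.Surjective Φ := by
    intro a
    obtain ⟨i, h, hh, rfl⟩ := habel.exists_mem_closure_smul_eq hτ (hgen a)
    obtain ⟨e, he⟩ := exists_fin_exponents_smul_eq hn hτn ((hτ i (x i)).trans Quandle.fix) hh
    exact ⟨⟨i, e⟩, he⟩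
  exact ⟨.of_surjective Φ hΦ,
    (Nat.card_le_card_of_surjective Φ hΦ).trans_eq (by simp)⟩

end IsAbelianQuandle

/-- If `X` is an abelian quandle generated by `r` elements, then for each `n ≥ 2` the
`n`-quandle quotient `X_n` of `X` is finite, of cardinality at most `r * n ^ (r - 1)`. -/
theorem abelian_nQuandle_quotient_finite {X : Type*} [Quandle X]
    (habel : IsAbelianQuandle X) (r n : ℕ) (hn : 2 ≤ n) (x : Fin r → X)
    (hgen : ∀ a : X, QuandleClosure (Set.range x) a) :
    Finite (Quotient (nQuandleSetoid X n)) ∧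
      Nat.card (Quotient (nQuandleSetoid X n)) ≤ r * n ^ (r - 1) := by
  refine (nQuandleSetoid.isAbelianQuandle_quotient habel).finite_and_card_le (by omega)
    nQuandleSetoid.iterate_act_quotient (nQuandleSetoid.mkHom X n ∘ x) fun q => ?_
  induction q using Quotient.inductionOn with
  | h a =>
    rw [Set.range_comp]
    exact (hgen a).image (nQuandleSetoid.mkHom X n)
end

section
/- Let X be an abelian quandle with a minimal generating set S. Then the number of orbits of X under the action of its inner automorphism group Inn(X) equals the cardinality of S. -/
/-- The connectedness setoid of a quandle: its classes are the orbits of the inner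
automorphism group `Inn(X)` (generated by the right translations) acting on `X`. -/
def quandleComponentSetoid (X : Type*) [Rack X] : Setoid X :=
  ⟨Relation.EqvGen (fun a b => ∃ c, b = Shelf.act c a), Relation.EqvGen.is_equivalence _⟩

open Quandles

section Aux

variable {X : Type*} [Quandle X]

/-- In an abelian quandle, translation by `a ◃ b` equals translation by `b`. -/
lemma act_act_eq_aux (habel : IsAbelianQuandle X) (a b c : X) :
    (a ◃ b) ◃ c = b ◃ c := by
  have h := Shelf.self_distrib (x := a) (y := b) (z := a ◃⁻¹ c)
  rw [Rack.act_invAct_eq] at h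
  rw [← h, habel (a ◃⁻¹ c) b a, Rack.act_invAct_eq]

lemma invAct_act_eq_aux (habel : IsAbelianQuandle X) (a b c : X) :
    (a ◃⁻¹ b) ◃ c = b ◃ c := by
  conv_rhs => rw [← Rack.act_invAct_eq a b]
  rw [act_act_eq_aux habel]

/-- Any element of the closure of `S` translates like some element of `S`. -/
lemma exists_rep (habel : IsAbelianQuandle X) {S : Set X} {x : X}
    (hx : QuandleClosure S x) : ∃ s ∈ S, ∀ c : X, x ◃ c = s ◃ c := by
  induction hx with
  | base h => exact ⟨_, h, fun _ => rfl⟩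
  | act _ _ _ ihb =>
    obtain ⟨s, hs, h⟩ := ihb
    exact ⟨s, hs, fun c => by rw [act_act_eq_aux habel, h]⟩
  | invAct _ _ _ ihb =>
    obtain ⟨s, hs, h⟩ := ihb
    exact ⟨s, hs, fun c => by rw [invAct_act_eq_aux habel, h]⟩

lemma iter_comm (habel : IsAbelianQuandle X) (t a : X) :
    ∀ (k : ℕ) (b : X), a ◃ ((t ◃ ·)^[k] b) = (t ◃ ·)^[k] (a ◃ b) := by
  intro k
  induction k with
  | zero => intro b; rfl
  | succ k ih =>
    intro b
    rw [Function.iterate_succ_apply, Function.iterate_succ_apply, ih, habel b t a]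

lemma iter_comm_inv (habel : IsAbelianQuandle X) (t a : X) (k : ℕ) (b : X) :
    a ◃⁻¹ ((t ◃ ·)^[k] b) = (t ◃ ·)^[k] (a ◃⁻¹ b) := by
  rw [← Rack.left_cancel a, Rack.act_invAct_eq, iter_comm habel, Rack.act_invAct_eq]

lemma quandleClosure_mono {S T : Set X} (h : ∀ s ∈ S, QuandleClosure T s) {x : X}
    (hx : QuandleClosure S x) : QuandleClosure T x := by
  induction hx with
  | base hb => exact h _ hb
  | act _ _ iha ihb => exact QuandleClosure.act iha ihb
  | invAct _ _ iha ihb => exact QuandleClosure.invAct iha ihb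

lemma iterate_act_self (t : X) (k : ℕ) : (t ◃ ·)^[k] t = t :=
  Function.iterate_fixed Quandle.fix k

/-- Surjectivity: every element is connected to a generator. -/
lemma exists_gen_rel {S : Set X} {x : X} (hx : QuandleClosure S x) :
    ∃ s ∈ S, Relation.EqvGen (fun a b : X => ∃ c, b = Shelf.act c a) s x := by
  induction hx with
  | base h => exact ⟨_, h, Relation.EqvGen.refl _⟩
  | act _ _ _ ihb =>
    obtain ⟨s, hs, h⟩ := ihb
    exact ⟨s, hs, Relation.EqvGen.trans _ _ _ h (Relation.EqvGen.rel _ _ ⟨_, rfl⟩)⟩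
  | invAct _ hb _ ihb =>
    obtain ⟨s, hs, h⟩ := ihb
    refine ⟨s, hs, Relation.EqvGen.trans _ _ _ h (Relation.EqvGen.symm _ _ ?_)⟩
    exact Relation.EqvGen.rel _ _ ⟨_, (Rack.act_invAct_eq _ _).symm⟩

/-- Injectivity: two generators in the same orbit are equal (using minimality). -/
lemma gen_rel_eq (habel : IsAbelianQuandle X) {S : Set X}
    (hgen : ∀ a : X, QuandleClosure S a)
    (hmin : ∀ T : Set X, T ⊂ S → ¬ (∀ a : X, QuandleClosure T a))
    {s t : X} (hs : s ∈ S) (ht : t ∈ S)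
    (hrel : Relation.EqvGen (fun a b : X => ∃ c, b = Shelf.act c a) s t) : s = t := by
  by_contra hne
  set T : Set X := S \ {t} with hT
  -- the invariant set
  set C : X → Prop := fun x => ∃ (k m : ℕ) (z : X),
    QuandleClosure T z ∧ (t ◃ ·)^[k] x = (t ◃ ·)^[m] z with hC
  -- C is invariant along the relation
  have step_fwd : ∀ a b : X, (∃ c, b = c ◃ a) → C a → C b := by
    rintro a b ⟨c, rfl⟩ ⟨k, m, z, hz, heq⟩
    obtain ⟨u, hu, hcu⟩ := exists_rep habel (hgen c)
    by_cases hut : u = t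
    · subst hut
      refine ⟨k, m + 1, z, hz, ?_⟩
      rw [hcu, ← iter_comm habel, heq, Function.iterate_succ_apply']
    · refine ⟨k, m, u ◃ z, QuandleClosure.act (.base ⟨hu, hut⟩) hz, ?_⟩
      rw [hcu, ← iter_comm habel, heq, iter_comm habel]
  have step_bwd : ∀ a b : X, (∃ c, b = c ◃ a) → C b → C a := by
    rintro a b ⟨c, rfl⟩ ⟨k, m, z, hz, heq⟩
    obtain ⟨u, hu, hcu⟩ := exists_rep habel (hgen c)
    rw [hcu] at heq
    by_cases hut : u = t
    · subst hut
      refine ⟨k + 1, m, z, hz, ?_⟩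
      rw [Function.iterate_succ_apply, ← heq]
    · refine ⟨k, m, u ◃⁻¹ z, QuandleClosure.invAct (.base ⟨hu, hut⟩) hz, ?_⟩
      rw [← iter_comm_inv habel, ← heq, ← iter_comm habel, Rack.invAct_act_eq]
  have hinv : ∀ a b : X, Relation.EqvGen (fun a b : X => ∃ c, b = c ◃ a) a b →
      (C a ↔ C b) := by
    intro a b h
    induction h with
    | rel a b hr => exact ⟨step_fwd a b hr, step_bwd a b hr⟩
    | refl => exact Iff.rfl
    | symm _ _ _ ih => exact ih.symm
    | trans _ _ _ _ _ ih1 ih2 => exact ih1.trans ih2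
  have hCs : C s := ⟨0, 0, s, .base ⟨hs, hne⟩, rfl⟩
  have hCt : C t := (hinv s t hrel).mp hCs
  obtain ⟨k, m, z, hz, heq⟩ := hCt
  rw [iterate_act_self] at heq
  -- deduce z = t
  have hzt : z = t := by
    have hinj : Function.Injective ((t ◃ ·)^[m]) :=
      (Rack.act' t).injective.iterate m
    apply hinj
    rw [← heq, iterate_act_self]
  have htT : QuandleClosure T t := hzt ▸ hz
  -- so T generates everything
  have hTgen : ∀ a : X, QuandleClosure T a := by
    intro a
    refine quandleClosure_mono ?_ (hgen a)
    intro s' hs'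
    by_cases h : s' = t
    · exact h ▸ htT
    · exact .base ⟨hs', h⟩
  exact hmin T ⟨Set.diff_subset, fun hsub => (hsub ht).2 rfl⟩ hTgen

end Aux

/-- If `X` is an abelian quandle with a minimal generating set `S`, then the number of orbits
of `X` under the action of `Inn(X)` equals the cardinality of `S`. -/
theorem abelian_quandle_orbits_eq_minimal_generators {X : Type*} [Quandle X]
    (habel : IsAbelianQuandle X) (S : Set X)
    (hgen : ∀ a : X, QuandleClosure S a)
    (hmin : ∀ T : Set X, T ⊂ S → ¬ (∀ a : X, QuandleClosure T a)) :
    Cardinal.mk (Quotient (quandleComponentSetoid X)) = Cardinal.mk S := by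
  letI := quandleComponentSetoid X
  let f : S → Quotient (quandleComponentSetoid X) := fun s => Quotient.mk _ (s : X)
  have hf : Function.Bijective f := by
    constructor
    · rintro ⟨a, ha⟩ ⟨b, hb⟩ hab
      have h : Relation.EqvGen (fun a b : X => ∃ c, b = Shelf.act c a) a b :=
        Quotient.exact hab
      exact Subtype.ext (gen_rel_eq habel hgen hmin ha hb h)
    · intro q
      induction q using Quotient.inductionOn with
      | h x =>
        obtain ⟨s, hs, h⟩ := exists_gen_rel (hgen x)
        exact ⟨⟨s, hs⟩, Quotient.sound h⟩
  exact (Cardinal.mk_congr (Equiv.ofBijective f hf)).symm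
end
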